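/- Commutator bound, H^{0,1/2} to L² version (Lemma 5.2, bound (com2)): Let s > (d+1)/2. There is a constant C, depending on d, s and k, such that for every f ∈ H^s(𝕋^d) and every trigonometric polynomial u on 𝕋^d, ‖f·P[∂_α u] − P[f·∂_α u]‖_{L²(𝕋^d)} ≤ C ‖f‖_{H^s} ‖u‖_{H^{0,1/2}}; consequently the commutator [f,P]∂_α extends to a bounded operator from H^{0,1/2}(𝕋^d) to L²(𝕋^d) with norm at most C‖f‖_{H^s}. -/

import Mathlib

noncomputable section
open scoped BigOperators
open Filter

/-- The frequency lattice `ℤ^d` of the torus `𝕋^d`. -/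
abbrev Freq (d : ℕ) := Fin d → ℤ

/-- A function on `𝕋^d`, represented by its sequence of Fourier coefficients. -/
abbrev Coeffs (d : ℕ) := Freq d → ℂ

variable {d : ℕ}

/-- The pairing `⟨j, k⟩` between a lattice frequency and the frequency vector `k ∈ ℝ^d`. -/
def dotk (k : Fin d → ℝ) (j : Freq d) : ℝ := ∑ i, (j i : ℝ) * k i

/-- The Japanese bracket `⟨j⟩ = (1+|j|²)^{1/2}`. -/
def jb (j : Freq d) : ℝ := Real.sqrt (1 + ∑ i, ((j i : ℝ)) ^ 2)

/-- The entries of `k` are linearly independent over `ℚ` (equivalently, over `ℤ`). -/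
def Indep (k : Fin d → ℝ) : Prop := ∀ j : Freq d, dotk k j = 0 → j = 0

/-- The weight defining the anisotropic Sobolev norm `H^{s,θ}`. -/
def wt (k : Fin d → ℝ) (s θ : ℝ) (j : Freq d) : ℝ :=
  jb j ^ (2 * s) * (1 + (dotk k j) ^ 2) ^ θ

/-- Membership in the anisotropic Sobolev space `H^{s,θ}(𝕋^d)`. -/
def MemSob (k : Fin d → ℝ) (s θ : ℝ) (u : Coeffs d) : Prop :=
  Summable (fun j : Freq d => wt k s θ j * ‖u j‖ ^ 2)

/-- The `H^{s,θ}(𝕋^d)` norm. -/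
def sobNorm (k : Fin d → ℝ) (s θ : ℝ) (u : Coeffs d) : ℝ :=
  Real.sqrt (∑' j : Freq d, wt k s θ j * ‖u j‖ ^ 2)

/-- Membership in the Sobolev space `H^s(𝕋^d)`; `H^0 = L²`. -/
def MemHs (s : ℝ) (u : Coeffs d) : Prop :=
  Summable (fun j : Freq d => jb j ^ (2 * s) * ‖u j‖ ^ 2)

/-- The `H^s(𝕋^d)` norm; for `s = 0` this is the `L²(𝕋^d)` norm (spectrally normalized). -/
def HsNorm (s : ℝ) (u : Coeffs d) : ℝ :=
  Real.sqrt (∑' j : Freq d, jb j ^ (2 * s) * ‖u j‖ ^ 2)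

/-- The value of the function with Fourier coefficients `u` at the point `α ∈ 𝕋^d = ℝ^d/(2πℤ)^d`,
namely `Σ_j û_j e^{i⟨j,α⟩}`. -/
def value (u : Coeffs d) (α : Fin d → ℝ) : ℂ :=
  ∑' j : Freq d, u j * Complex.exp (Complex.I * ((∑ i, (j i : ℝ) * α i : ℝ) : ℂ))

/-- The squared norm of the space `ℋ^σ = H^σ × H^{σ,1/2}`. -/
def HHnormSq (k : Fin d → ℝ) (σ : ℝ) (W R : Coeffs d) : ℝ :=
  HsNorm σ W ^ 2 + sobNorm k σ (1/2) R ^ 2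

/-- The norm of the space `ℋ^σ = H^σ × H^{σ,1/2}`. -/
def HHnorm (k : Fin d → ℝ) (σ : ℝ) (W R : Coeffs d) : ℝ :=
  Real.sqrt (HHnormSq k σ W R)

/-- Membership in `ℋ^σ = H^σ × H^{σ,1/2}`. -/
def MemHH (k : Fin d → ℝ) (σ : ℝ) (W R : Coeffs d) : Prop :=
  MemHs σ W ∧ MemSob k σ (1/2) R

/-- The directional derivative `∂_α = k₁∂₁+⋯+k_d∂_d`, acting on Fourier coefficients
by multiplication by `i⟨j,k⟩`. -/
def dAl (k : Fin d → ℝ) (u : Coeffs d) : Coeffs d :=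
  fun j => Complex.I * (dotk k j : ℝ) * u j

/-- The projection `P`: the Fourier multiplier which is `1` for `⟨j,k⟩ < 0`, `1/2`
at the zero mode, `0` for `⟨j,k⟩ > 0`. -/
def Pp (k : Fin d → ℝ) (u : Coeffs d) : Coeffs d := fun j =>
  if dotk k j < 0 then u j else if dotk k j = 0 then u j / 2 else 0

/-- The complementary projection `P̄ = I - P`. -/
def Pb (k : Fin d → ℝ) (u : Coeffs d) : Coeffs d := u - Pp k u

/-- The Fourier coefficients of the complex conjugate function. -/
def conjC (u : Coeffs d) : Coeffs d := fun j => (starRingEnd ℂ) (u (-j))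

/-- The Fourier coefficients of the product of two functions (convolution). -/
def cmul (u v : Coeffs d) : Coeffs d := fun j => ∑' m : Freq d, u m * v (j - m)

/-- The Fourier coefficients of the constant function `1`. -/
def oneC : Coeffs d := fun j => if j = 0 then 1 else 0

/-- `u` is holomorphic: its Fourier coefficients vanish for `⟨j,k⟩ > 0`. -/
def Holo (k : Fin d → ℝ) (u : Coeffs d) : Prop := ∀ j : Freq d, 0 < dotk k j → u j = 0

/-- The coefficients of `2 Re u`. -/
def twoRe (u : Coeffs d) : Coeffs d := u + conjC u

/-- The coefficients of `2 Im u`. -/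
def twoIm (u : Coeffs d) : Coeffs d := fun j => (u j - conjC u j) / Complex.I

/-- The coefficients of `u²`. -/
def csq (u : Coeffs d) : Coeffs d := cmul u u

/-- The coefficients of `|u|² = u·conj(u)`. -/
def absSqC (u : Coeffs d) : Coeffs d := cmul u (conjC u)

/-- The advection velocity `b := 2 Re P[R(1-conj Y)]`. -/
def bC (k : Fin d → ℝ) (R Y : Coeffs d) : Coeffs d :=
  twoRe (Pp k (cmul R (oneC - conjC Y)))

/-- The frequency shift `a := i(P̄[conj(R)·R_α] - P[R·conj(R)_α])`. -/
def aCf (k : Fin d → ℝ) (R : Coeffs d) : Coeffs d := fun j =>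
  Complex.I * ((Pb k (cmul (conjC R) (dAl k R)) - Pp k (cmul R (dAl k (conjC R)))) j)

/-- The auxiliary function
`M := P̄[conj(R)·Y_α − R_α·conj(Y)] + P[R·conj(Y)_α − conj(R)_α·Y]`. -/
def MCf (k : Fin d → ℝ) (R Y : Coeffs d) : Coeffs d :=
  Pb k (cmul (conjC R) (dAl k Y) - cmul (dAl k R) (conjC Y))
    + Pp k (cmul R (dAl k (conjC Y)) - cmul (dAl k (conjC R)) Y)

/-- `(W,R,Y)` solves the differentiated gravity water wave system on the time interval `I`:
`𝐖_t + b·𝐖_α + (1+𝐖)(1−conj Y)·R_α = (1+𝐖)M` and `R_t + b·R_α = i(Y − a(1−Y))`,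
where `Y = 𝐖/(1+𝐖)` (equivalently `(1+𝐖)·Y = 𝐖`), so that
`(1+𝐖)/(1+conj 𝐖) = (1+𝐖)(1−conj Y)` and `i(𝐖−a)/(1+𝐖) = i(Y − a(1−Y))`. -/
structure IsWWSol (k : Fin d → ℝ) (I : Set ℝ) (W R Y : ℝ → Coeffs d) : Prop where
  holoW : ∀ t ∈ I, Holo k (W t)
  holoR : ∀ t ∈ I, Holo k (R t)
  Ymem : ∀ t ∈ I, MemHs 0 (Y t)
  Ydef : ∀ t ∈ I, cmul (oneC + W t) (Y t) = W t
  eqW : ∀ t ∈ I, ∀ j : Freq d,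
    HasDerivWithinAt (fun τ => W τ j)
      ((cmul (oneC + W t) (MCf k (R t) (Y t))
        - cmul (bC k (R t) (Y t)) (dAl k (W t))
        - cmul (cmul (oneC + W t) (oneC - conjC (Y t))) (dAl k (R t))) j) I t
  eqR : ∀ t ∈ I, ∀ j : Freq d,
    HasDerivWithinAt (fun τ => R τ j)
      ((Complex.I • (Y t - cmul (aCf k (R t)) (oneC - Y t))
        - cmul (bC k (R t) (Y t)) (dAl k (R t))) j) I t

/-!
On the Fourier side the commutator is the kernel operator
`ĝ(j) = Σ_l f̂(j-l) (χ(l) - χ(j)) i⟨l,k⟩ û(l)`, where `χ` is the symbol of `P`. The symbols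
differ only if `⟨l,k⟩` and `⟨j,k⟩` do not have the same strict sign, and then
`|⟨l,k⟩| ≤ |⟨j-l,k⟩| ≲ ⟨j-l⟩`; hence `|⟨l,k⟩|² ≲ ⟨j-l⟩ (1+⟨l,k⟩²)^{1/2}`. Young's inequality
`ℓ¹ * ℓ² → ℓ²` bounds the commutator by `‖⟨m⟩^{1/2} f̂‖_{ℓ¹} ‖u‖_{H^{0,1/2}}`, and by
Cauchy–Schwarz `‖⟨m⟩^{1/2} f̂‖_{ℓ¹} ≤ (Σ ⟨m⟩^{1-2s})^{1/2} ‖f‖_{H^s}`, which is finite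
because `2s - 1 > d`.
-/

def projSymbol (k : Fin d → ℝ) (j : Freq d) : ℝ :=
  if dotk k j < 0 then 1 else if dotk k j = 0 then 1 / 2 else 0

lemma Pp_apply (k : Fin d → ℝ) (u : Coeffs d) (j : Freq d) :
    Pp k u j = (projSymbol k j : ℂ) * u j := by
  simp only [Pp, projSymbol]
  split_ifs <;> push_cast <;> ring

lemma abs_projSymbol_sub_le_one (k : Fin d → ℝ) (l j : Freq d) :
    |projSymbol k l - projSymbol k j| ≤ 1 := by
  unfold projSymbol
  split_ifs <;> norm_num [abs_le]

lemma dotk_mul_nonpos_of_projSymbol_ne {k : Fin d → ℝ} {l j : Freq d}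
    (h : projSymbol k l ≠ projSymbol k j) : dotk k l * dotk k j ≤ 0 := by
  contrapose! h
  rcases lt_or_gt_of_ne (left_ne_zero_of_mul h.ne') with hl | hl
  · have hj : dotk k j < 0 := neg_of_mul_pos_right h hl.le
    simp [projSymbol, hl, hj]
  · have hj : 0 < dotk k j := pos_of_mul_pos_right h hl.le
    simp [projSymbol, hl.not_gt, hl.ne', hj.not_gt, hj.ne']

lemma dotk_sub (k : Fin d → ℝ) (a b : Freq d) : dotk k (a - b) = dotk k a - dotk k b := by
  simp only [dotk, ← Finset.sum_sub_distrib, Pi.sub_apply, Int.cast_sub, sub_mul]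

lemma jb_nonneg (j : Freq d) : 0 ≤ jb j := Real.sqrt_nonneg _

lemma abs_intCast_le_jb (j : Freq d) (i : Fin d) : |(j i : ℝ)| ≤ jb j := by
  rw [← Real.sqrt_sq_eq_abs, jb]
  gcongr
  have := Finset.single_le_sum (f := fun i => ((j i : ℝ)) ^ 2) (fun _ _ => sq_nonneg _)
    (Finset.mem_univ i)
  linarith

lemma abs_dotk_le (k : Fin d → ℝ) (j : Freq d) : |dotk k j| ≤ (∑ i, |k i|) * jb j := by
  calc |dotk k j| ≤ ∑ i, |(j i : ℝ)| * |k i| := by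
        simpa only [dotk, abs_mul] using
          Finset.abs_sum_le_sum_abs (fun i => (j i : ℝ) * k i) Finset.univ
    _ ≤ ∑ i, jb j * |k i| := by gcongr with i; exact abs_intCast_le_jb j i
    _ = (∑ i, |k i|) * jb j := by rw [← Finset.mul_sum, mul_comm]

lemma sq_projSymbol_sub_mul_dotk_le (k : Fin d → ℝ) (j l : Freq d) :
    ((projSymbol k l - projSymbol k j) * dotk k l) ^ 2 ≤
      (∑ i, |k i|) * jb (j - l) * Real.sqrt (1 + dotk k l ^ 2) := by
  by_cases hc : projSymbol k l = projSymbol k j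
  · rw [hc, sub_self, zero_mul, sq, zero_mul]
    have := jb_nonneg (j - l)
    positivity
  have hsign := dotk_mul_nonpos_of_projSymbol_ne hc
  have hjl : |dotk k l| ≤ (∑ i, |k i|) * jb (j - l) := by
    refine le_trans ?_ (abs_dotk_le k (j - l))
    rw [dotk_sub, ← sq_le_sq]
    nlinarith
  have hl : |dotk k l| ≤ Real.sqrt (1 + dotk k l ^ 2) :=
    Real.abs_le_sqrt (by linarith)
  calc ((projSymbol k l - projSymbol k j) * dotk k l) ^ 2
      ≤ |dotk k l| ^ 2 := by
        rw [mul_pow, ← sq_abs (dotk k l), ← sq_abs (projSymbol k l - projSymbol k j)]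
        exact mul_le_of_le_one_left (sq_nonneg _)
          (pow_le_one₀ (abs_nonneg _) (abs_projSymbol_sub_le_one k l j))
    _ ≤ _ := by rw [sq]; exact mul_le_mul hjl hl (abs_nonneg _) ((abs_nonneg _).trans hjl)

lemma cmul_apply_eq_sum (f : Coeffs d) {v : Coeffs d} {F : Finset (Freq d)}
    (hv : ∀ l ∉ F, v l = 0) (j : Freq d) : cmul f v j = ∑ l ∈ F, f (j - l) * v l := by
  rw [cmul, ← (Equiv.subLeft j).tsum_eq]
  simp only [Equiv.subLeft_apply, sub_sub_cancel]
  exact tsum_eq_sum fun l hl => by rw [hv l hl, mul_zero]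

lemma commutator_apply (k : Fin d → ℝ) (f : Coeffs d) {u : Coeffs d} {F : Finset (Freq d)}
    (hu : ∀ l ∉ F, u l = 0) (j : Freq d) :
    (cmul f (Pp k (dAl k u)) - Pp k (cmul f (dAl k u))) j =
      ∑ l ∈ F, f (j - l) * ((projSymbol k l - projSymbol k j : ℝ) : ℂ) * dAl k u l := by
  have hdu : ∀ l ∉ F, dAl k u l = 0 := fun l hl => by simp [dAl, hu l hl]
  have hPdu : ∀ l ∉ F, Pp k (dAl k u) l = 0 := fun l hl => by simp [Pp_apply, hdu l hl]
  rw [Pi.sub_apply, cmul_apply_eq_sum f hPdu, Pp_apply, cmul_apply_eq_sum f hdu, Finset.mul_sum,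
    ← Finset.sum_sub_distrib]
  refine Finset.sum_congr rfl fun l _ => ?_
  rw [Pp_apply]
  push_cast
  ring

lemma wt_zero_half (k : Fin d → ℝ) (l : Freq d) :
    wt k 0 (1 / 2) l = Real.sqrt (1 + dotk k l ^ 2) := by
  rw [wt, mul_zero, Real.rpow_zero, one_mul, Real.sqrt_eq_rpow]

lemma norm_commutator_apply_le (k : Fin d → ℝ) (f : Coeffs d) {u : Coeffs d}
    {F : Finset (Freq d)} (hu : ∀ l ∉ F, u l = 0) (j : Freq d) :
    ‖(cmul f (Pp k (dAl k u)) - Pp k (cmul f (dAl k u))) j‖ ≤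
      ∑ l ∈ F, Real.sqrt (∑ i, |k i|) * (Real.sqrt (jb (j - l)) * ‖f (j - l)‖) *
        (Real.sqrt (wt k 0 (1 / 2) l) * ‖u l‖) := by
  rw [commutator_apply k f hu j]
  refine (norm_sum_le _ _).trans (Finset.sum_le_sum fun l _ => ?_)
  have hsymb : |(projSymbol k l - projSymbol k j) * dotk k l| ≤
      Real.sqrt (∑ i, |k i|) * Real.sqrt (jb (j - l)) * Real.sqrt (wt k 0 (1 / 2) l) := by
    rw [wt_zero_half, ← Real.sqrt_mul' _ (jb_nonneg _), ← Real.sqrt_mul' _ (Real.sqrt_nonneg _)]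
    exact Real.abs_le_sqrt (sq_projSymbol_sub_mul_dotk_le k j l)
  calc ‖f (j - l) * ((projSymbol k l - projSymbol k j : ℝ) : ℂ) * dAl k u l‖
      = |(projSymbol k l - projSymbol k j) * dotk k l| * (‖f (j - l)‖ * ‖u l‖) := by
        simp only [dAl, norm_mul, Complex.norm_real, Real.norm_eq_abs, Complex.norm_I, abs_mul]
        ring
    _ ≤ Real.sqrt (∑ i, |k i|) * Real.sqrt (jb (j - l)) * Real.sqrt (wt k 0 (1 / 2) l) *
          (‖f (j - l)‖ * ‖u l‖) := by gcongr
    _ = _ := by ring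

/-- Young's inequality `ℓ¹ * ℓ² → ℓ²`. -/
theorem summable_and_tsum_sq_le_of_le_conv {G E : Type*} [AddCommGroup G] [SeminormedAddGroup E]
    {a w : G → ℝ} {g : G → E} {F : Finset G} (ha0 : ∀ m, 0 ≤ a m) (ha : Summable a)
    (hg : ∀ j, ‖g j‖ ≤ ∑ l ∈ F, a (j - l) * w l) :
    Summable (fun j => ‖g j‖ ^ 2) ∧ ∑' j, ‖g j‖ ^ 2 ≤ (∑' m, a m) ^ 2 * ∑ l ∈ F, w l ^ 2 := by
  have hsubLeft : ∀ j, Summable (fun l => a (j - l)) ∧ ∑' l, a (j - l) = ∑' m, a m := fun j =>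
    ⟨(Equiv.subLeft j).summable_iff.2 ha, (Equiv.subLeft j).tsum_eq a⟩
  have hsubRight : ∀ l, Summable (fun j => a (j - l)) ∧ ∑' j, a (j - l) = ∑' m, a m := fun l =>
    ⟨(Equiv.subRight l).summable_iff.2 ha, (Equiv.subRight l).tsum_eq a⟩
  have hpt : ∀ j, ‖g j‖ ^ 2 ≤ (∑' m, a m) * ∑ l ∈ F, a (j - l) * w l ^ 2 := fun j =>
    calc ‖g j‖ ^ 2 ≤ (∑ l ∈ F, a (j - l) * w l) ^ 2 := by gcongr; exact hg j
      _ ≤ (∑ l ∈ F, a (j - l)) * ∑ l ∈ F, a (j - l) * w l ^ 2 :=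
        Finset.sum_sq_le_sum_mul_sum_of_sq_le_mul F (fun l _ => ha0 _)
          (fun l _ => mul_nonneg (ha0 _) (sq_nonneg _)) (fun l _ => le_of_eq (by ring))
      _ ≤ (∑' m, a m) * ∑ l ∈ F, a (j - l) * w l ^ 2 := by
        gcongr
        · exact Finset.sum_nonneg fun l _ => mul_nonneg (ha0 _) (sq_nonneg _)
        · exact (hsubLeft j).2 ▸ (hsubLeft j).1.sum_le_tsum F fun l _ => ha0 _
  have hmaj : HasSum (fun j => (∑' m, a m) * ∑ l ∈ F, a (j - l) * w l ^ 2)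
      ((∑' m, a m) ^ 2 * ∑ l ∈ F, w l ^ 2) := by
    rw [sq, mul_assoc, Finset.mul_sum]
    refine (hasSum_sum fun l _ => ?_).mul_left _
    exact (hsubRight l).2 ▸ ((hsubRight l).1.hasSum.mul_right (w l ^ 2))
  have hsum := Summable.of_nonneg_of_le (fun j => sq_nonneg _) hpt hmaj.summable
  exact ⟨hsum, (hsum.tsum_le_tsum hpt hmaj.summable).trans_eq hmaj.tsum_eq⟩

lemma summable_jb_rpow {r : ℝ} (hr : r < -(d : ℝ)) : Summable (fun m : Freq d => jb m ^ r) := by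
  let b := (Pi.basisFun ℝ (Fin d)).restrictScalars ℤ
  have hrank : Module.finrank ℤ (Submodule.span ℤ (Set.range (Pi.basisFun ℝ (Fin d)))) = d := by
    simp [Module.finrank_eq_card_basis b]
  have hlat : Summable (fun m : Freq d => ‖(fun i => (m i : ℝ))‖ ^ r) := by
    refine ((b.equivFun.symm.toEquiv.summable_iff).2
      (ZLattice.summable_norm_rpow _ r (by rw [hrank]; exact hr))).congr fun m => ?_
    simp only [Function.comp_apply, Submodule.coe_norm]
    congr 2
    ext i
    simp [b, Module.Basis.equivFun_symm_apply, Pi.single_apply]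
  refine hlat.of_norm_bounded_eventually ?_
  filter_upwards [Set.Finite.compl_mem_cofinite (Set.finite_singleton (0 : Freq d))] with m hm
  have hpos : 0 < ‖(fun i => (m i : ℝ))‖ := by
    refine norm_pos_iff.2 fun h0 => hm (funext fun i => ?_)
    simpa using congrFun h0 i
  have hle : ‖(fun i => (m i : ℝ))‖ ≤ jb m :=
    (pi_norm_le_iff_of_nonneg (jb_nonneg m)).2 fun i => abs_intCast_le_jb m i
  rw [Real.norm_of_nonneg (Real.rpow_nonneg (jb_nonneg m) r)]
  exact Real.rpow_le_rpow_of_nonpos hpos hle (by linarith [(Nat.cast_nonneg d : (0 : ℝ) ≤ d)])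

lemma summable_and_tsum_sqrt_jb_mul_norm_le {s : ℝ} {f : Coeffs d}
    (hS : Summable (fun m : Freq d => jb m ^ (1 - 2 * s))) (hf : MemHs s f) :
    Summable (fun m => Real.sqrt (jb m) * ‖f m‖) ∧
      ∑' m, Real.sqrt (jb m) * ‖f m‖ ≤
        Real.sqrt (∑' m : Freq d, jb m ^ (1 - 2 * s)) * HsNorm s f := by
  have hjb : ∀ m : Freq d, 0 < jb m := fun m => Real.sqrt_pos.2 (by positivity)
  have hsq : ∀ m : Freq d, ∀ t : ℝ, (jb m ^ t) ^ (2 : ℝ) = jb m ^ (2 * t) := fun m t => by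
    rw [← Real.rpow_mul (hjb m).le, mul_comm]
  have hprod : ∀ m : Freq d,
      jb m ^ ((1 - 2 * s) / 2) * (jb m ^ s * ‖f m‖) = Real.sqrt (jb m) * ‖f m‖ := fun m => by
    rw [← mul_assoc, ← Real.rpow_add (hjb m), Real.sqrt_eq_rpow]
    ring_nf
  have hHolder := Real.summable_and_inner_le_Lp_mul_Lq_tsum_of_nonneg Real.HolderConjugate.two_two
    (f := fun m : Freq d => jb m ^ ((1 - 2 * s) / 2)) (g := fun m => jb m ^ s * ‖f m‖)
    (fun m => Real.rpow_nonneg (hjb m).le _)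
    (fun m => mul_nonneg (Real.rpow_nonneg (hjb m).le _) (norm_nonneg _))
  have htwo : 2 * ((1 - 2 * s) / 2) = 1 - 2 * s := by ring
  simp only [hprod, Real.mul_rpow (Real.rpow_nonneg (hjb _).le _) (norm_nonneg _), hsq,
    htwo, Real.rpow_two] at hHolder
  simpa only [HsNorm, Real.sqrt_eq_rpow] using hHolder hS hf

lemma HsNorm_zero (g : Coeffs d) : HsNorm 0 g = Real.sqrt (∑' j, ‖g j‖ ^ 2) := by
  simp [HsNorm]

lemma sobNorm_zero_half_sq_eq_sum {k : Fin d → ℝ} {u : Coeffs d} {F : Finset (Freq d)}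
    (hu : ∀ l ∉ F, u l = 0) :
    sobNorm k 0 (1 / 2) u ^ 2 = ∑ l ∈ F, (Real.sqrt (wt k 0 (1 / 2) l) * ‖u l‖) ^ 2 := by
  have hwt : ∀ l, 0 ≤ wt k 0 (1 / 2) l := fun l => by rw [wt_zero_half]; positivity
  rw [sobNorm, Real.sq_sqrt (tsum_nonneg fun l => mul_nonneg (hwt l) (sq_nonneg _)),
    tsum_eq_sum fun l hl => by rw [hu l hl, norm_zero, sq, mul_zero, mul_zero]]
  exact Finset.sum_congr rfl fun l _ => by rw [mul_pow, Real.sq_sqrt (hwt l)]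

theorem HsNorm_zero_commutator_le (k : Fin d → ℝ) {f u : Coeffs d}
    (hf : Summable (fun m => Real.sqrt (jb m) * ‖f m‖)) (hu : (Function.support u).Finite) :
    HsNorm 0 (cmul f (Pp k (dAl k u)) - Pp k (cmul f (dAl k u))) ≤
      Real.sqrt (∑ i, |k i|) * (∑' m, Real.sqrt (jb m) * ‖f m‖) * sobNorm k 0 (1 / 2) u := by
  have hF : ∀ l ∉ hu.toFinset, u l = 0 := fun l hl => by simpa using hl
  obtain ⟨-, hyoung⟩ := summable_and_tsum_sq_le_of_le_conv
    (fun m => by positivity) (hf.mul_left (Real.sqrt (∑ i, |k i|)))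
    (norm_commutator_apply_le k f hF)
  rw [tsum_mul_left, ← sobNorm_zero_half_sq_eq_sum hF, ← mul_pow] at hyoung
  rw [HsNorm_zero]
  refine Real.sqrt_le_iff.2 ⟨?_, hyoung⟩
  exact mul_nonneg (mul_nonneg (Real.sqrt_nonneg _) (tsum_nonneg fun m => by positivity))
    (Real.sqrt_nonneg _)

theorem commutator_H012_L2_general
    (d : ℕ) (k : Fin d → ℝ)
    (s : ℝ) (hs : ((d : ℝ) + 1) / 2 < s) :
    ∃ C : ℝ, 0 < C ∧
      ∀ f u : Coeffs d, MemHs s f → (Function.support u).Finite →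
        HsNorm 0 (cmul f (Pp k (dAl k u)) - Pp k (cmul f (dAl k u)))
          ≤ C * HsNorm s f * sobNorm k 0 (1/2) u := by
  have hS : Summable (fun m : Freq d => jb m ^ (1 - 2 * s)) := summable_jb_rpow (by linarith)
  -- `C₀` vanishes when `k = 0`, hence the `+ 1`.
  set C₀ := Real.sqrt (∑ i, |k i|) * Real.sqrt (∑' m : Freq d, jb m ^ (1 - 2 * s))
  refine ⟨C₀ + 1, by positivity, fun f u hf hu => ?_⟩
  obtain ⟨hf₁, hf₁_le⟩ := summable_and_tsum_sqrt_jb_mul_norm_le hS hf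
  have hf₀ : 0 ≤ HsNorm s f := Real.sqrt_nonneg _
  have hu₀ : 0 ≤ sobNorm k 0 (1 / 2) u := Real.sqrt_nonneg _
  calc _ ≤ Real.sqrt (∑ i, |k i|) * (∑' m, Real.sqrt (jb m) * ‖f m‖) * sobNorm k 0 (1 / 2) u :=
        HsNorm_zero_commutator_le k hf₁ hu
    _ ≤ Real.sqrt (∑ i, |k i|) * (Real.sqrt (∑' m : Freq d, jb m ^ (1 - 2 * s)) * HsNorm s f) *
          sobNorm k 0 (1 / 2) u := by gcongr
    _ = C₀ * HsNorm s f * sobNorm k 0 (1 / 2) u := by ring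
    _ ≤ (C₀ + 1) * HsNorm s f * sobNorm k 0 (1 / 2) u := by gcongr; linarith

/-- **Lemma 5.2, bound (com2) (Commutator bound, `H^{0,1/2} → L²` version).** Let
`s > (d+1)/2`. There is a constant `C = C(d,s,k)` such that for every `f ∈ H^s(𝕋^d)`
and every trigonometric polynomial `u` on `𝕋^d`,
`‖f·P[∂_α u] − P[f·∂_α u]‖_{L²} ≤ C ‖f‖_{H^s} ‖u‖_{H^{0,1/2}}`;
consequently `[f,P]∂_α` extends to a bounded operator `H^{0,1/2}(𝕋^d) → L²(𝕋^d)`. -/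
theorem commutator_H012_L2
    (d : ℕ) (hd : 1 ≤ d) (k : Fin d → ℝ) (hk : Indep k)
    (s : ℝ) (hs : ((d : ℝ) + 1) / 2 < s) :
    ∃ C : ℝ, 0 < C ∧
      ∀ f u : Coeffs d, MemHs s f → (Function.support u).Finite →
        HsNorm 0 (cmul f (Pp k (dAl k u)) - Pp k (cmul f (dAl k u)))
          ≤ C * HsNorm s f * sobNorm k 0 (1/2) u :=
  commutator_H012_L2_general d k s hs
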